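/- arXiv:2211.13205 — 4 statements merged into one kernel-verified Lean document; each statement's English description precedes it below -/
import Mathlib

section
/- Let I = {I_m} be a filtration in a Noetherian ring R and α ∈ ℝ_{>0}. Define the twist I^(α) by I^(α)_m = I_{⌈αm⌉}. Then ν̄_I(x) = α·ν̄_{I^(α)}(x) for all x ∈ R. -/
open Filter Topology Polynomial
open scoped ENNReal

/-- A filtration `I = {I_m}` of ideals of `R`: `I_0 = R`, `I_{n+1} ⊆ I_n`,
and `I_m · I_n ⊆ I_{m+n}`. -/
structure RingFiltration (R : Type*) [CommRing R] where
  I : ℕ → Ideal R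
  top_eq : I 0 = ⊤
  antitone_succ : ∀ n, I (n + 1) ≤ I n
  mul_le : ∀ m n, I m * I n ≤ I (m + n)

namespace RingFiltration
variable {R : Type*} [CommRing R] (F : RingFiltration R)

/-- The order function `ν_I(f) = sup {m : f ∈ I_m}`, viewed in `[0,∞]`. -/
noncomputable def nu (f : R) : ℝ≥0∞ :=
  sSup ((fun m : ℕ => (m : ℝ≥0∞)) '' {m | f ∈ F.I m})

/-- The asymptotic Samuel function `ν̄_I(f) = lim_n ν_I(f^n)/n` (the limit exists and
equals the limsup used here to define it). -/
noncomputable def nubar (f : R) : ℝ≥0∞ :=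
  Filter.limsup (fun n : ℕ => F.nu (f ^ n) / (n : ℝ≥0∞)) Filter.atTop

end RingFiltration

namespace RingFiltrationAux

variable {R : Type*} [CommRing R]

lemma antitone_I (F : RingFiltration R) : Antitone F.I :=
  antitone_nat_of_succ_le F.antitone_succ

lemma le_nu (F : RingFiltration R) {f : R} {m : ℕ} (h : f ∈ F.I m) :
    (m : ℝ≥0∞) ≤ F.nu f :=
  le_sSup ⟨m, h, rfl⟩

lemma nu_le (F : RingFiltration R) {f : R} {a : ℝ≥0∞}
    (h : ∀ m : ℕ, f ∈ F.I m → (m : ℝ≥0∞) ≤ a) : F.nu f ≤ a := by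
  refine sSup_le ?_
  rintro x ⟨m, hm, rfl⟩
  exact h m hm

/-- Claim A: `α · ν_G(f) ≤ ν_F(f)`. -/
lemma claimA (F G : RingFiltration R) {α : ℝ} (hα : 0 < α)
    (hG : ∀ m : ℕ, G.I m = F.I ⌈α * m⌉₊) (f : R) :
    ENNReal.ofReal α * G.nu f ≤ F.nu f := by
  rw [RingFiltration.nu, sSup_image, ENNReal.mul_iSup]
  refine iSup_le fun m => ?_
  rw [ENNReal.mul_iSup]
  refine iSup_le fun hm => ?_
  simp only [Set.mem_setOf_eq, hG m] at hm
  calc ENNReal.ofReal α * (m : ℝ≥0∞)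
      = ENNReal.ofReal (α * m) := by
        rw [ENNReal.ofReal_mul hα.le, ENNReal.ofReal_natCast]
    _ ≤ (⌈α * m⌉₊ : ℝ≥0∞) := by
        rw [← ENNReal.ofReal_natCast]
        exact ENNReal.ofReal_le_ofReal (Nat.le_ceil _)
    _ ≤ F.nu f := le_nu F hm

/-- Claim B: `ν_F(f) ≤ α · (ν_G(f) + 1)`. -/
lemma claimB (F G : RingFiltration R) {α : ℝ} (hα : 0 < α)
    (hG : ∀ m : ℕ, G.I m = F.I ⌈α * m⌉₊) (f : R) :
    F.nu f ≤ ENNReal.ofReal α * (G.nu f + 1) := by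
  refine nu_le F fun k hk => ?_
  set m : ℕ := ⌊(k : ℝ) / α⌋₊ with hm
  have hmem : f ∈ G.I m := by
    rw [hG m]
    refine antitone_I F ?_ hk
    rw [Nat.ceil_le]
    have h1 : (m : ℝ) ≤ (k : ℝ) / α := Nat.floor_le (by positivity)
    calc α * (m : ℝ) ≤ α * ((k : ℝ) / α) := by
          exact mul_le_mul_of_nonneg_left h1 hα.le
      _ = (k : ℝ) := by field_simp
  have hub : (k : ℝ) ≤ α * ((m : ℝ) + 1) := by
    have h2 : (k : ℝ) / α < (m : ℝ) + 1 := Nat.lt_floor_add_one _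
    have := (div_lt_iff₀ hα).mp h2
    linarith
  calc (k : ℝ≥0∞) = ENNReal.ofReal (k : ℝ) := (ENNReal.ofReal_natCast k).symm
    _ ≤ ENNReal.ofReal (α * ((m : ℝ) + 1)) := ENNReal.ofReal_le_ofReal hub
    _ = ENNReal.ofReal α * ((m : ℝ≥0∞) + 1) := by
        rw [ENNReal.ofReal_mul hα.le, ENNReal.ofReal_add (by positivity) zero_le_one]
        simp [ENNReal.ofReal_natCast]
    _ ≤ ENNReal.ofReal α * (G.nu f + 1) := by
        gcongr
        exact le_nu G hmem

end RingFiltrationAux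

open RingFiltrationAux in
/-- If `I` is a filtration of a Noetherian ring `R`, `α > 0` is real, and `I^(α)` is the
twist with `I^(α)_m = I_{⌈αm⌉}`, then `ν̄_I(x) = α·ν̄_{I^(α)}(x)` for all `x`. -/
theorem nubar_twist {R : Type*} [CommRing R] [IsNoetherianRing R]
    (F G : RingFiltration R) (α : ℝ) (hα : 0 < α)
    (hG : ∀ m : ℕ, G.I m = F.I ⌈α * m⌉₊) (x : R) :
    F.nubar x = ENNReal.ofReal α * G.nubar x := by
  set c : ℝ≥0∞ := ENNReal.ofReal α with hc
  have hc0 : c ≠ 0 := by simp [hc, hα, ENNReal.ofReal_pos.mpr hα |>.ne']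
  have hctop : c ≠ ⊤ := ENNReal.ofReal_ne_top
  set a : ℕ → ℝ≥0∞ := fun n => F.nu (x ^ n) / n with ha
  set b : ℕ → ℝ≥0∞ := fun n => G.nu (x ^ n) / n with hb
  have hF : F.nubar x = limsup a atTop := rfl
  have hGnub : G.nubar x = limsup b atTop := rfl
  rw [hF, hGnub]
  apply le_antisymm
  · -- limsup a ≤ c * limsup b
    by_cases htop : limsup b atTop = ⊤
    · rw [htop, ENNReal.mul_top hc0]; exact le_top
    · apply ENNReal.le_of_forall_pos_le_add
      intro ε hε _
      have hεtop : (ε : ℝ≥0∞) ≠ ⊤ := ENNReal.coe_ne_top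
      -- eventually c / n ≤ ε
      have htend : Tendsto (fun n : ℕ => c / (n : ℝ≥0∞)) atTop (𝓝 0) := by
        have := ENNReal.Tendsto.const_div (a := c)
          ENNReal.tendsto_nat_nhds_top (Or.inr hctop)
        simpa [ENNReal.div_top] using this
      have hev : ∀ᶠ n : ℕ in atTop, c / (n : ℝ≥0∞) ≤ (ε : ℝ≥0∞) :=
        htend.eventually (eventually_le_nhds (by exact_mod_cast hε))
      have hptwise : ∀ᶠ n : ℕ in atTop, a n ≤ c * b n + (ε : ℝ≥0∞) := by
        filter_upwards [hev] with n hn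
        calc a n = F.nu (x ^ n) / n := rfl
          _ ≤ (c * (G.nu (x ^ n) + 1)) / n := by
              gcongr
              exact claimB F G hα hG (x ^ n)
          _ = (c * G.nu (x ^ n) + c) / n := by rw [mul_add, mul_one]
          _ = (c * G.nu (x ^ n)) / n + c / n := ENNReal.add_div
          _ = c * b n + c / n := by
              simp only [hb, ENNReal.div_eq_inv_mul]
              ring
          _ ≤ c * b n + (ε : ℝ≥0∞) := by gcongr
      calc limsup a atTop ≤ limsup (fun n => c * b n + (ε : ℝ≥0∞)) atTop :=
            limsup_le_limsup hptwise
        _ = limsup (fun n => c * b n) atTop + (ε : ℝ≥0∞) := by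
            apply limsup_add_const
            · exact isBounded_le_of_top
            · exact isCobounded_le_of_bot
        _ = c * limsup b atTop + (ε : ℝ≥0∞) := by
            rw [ENNReal.limsup_const_mul_of_ne_top hctop]
  · -- c * limsup b ≤ limsup a
    rw [← ENNReal.limsup_const_mul_of_ne_top hctop]
    refine limsup_le_limsup (Eventually.of_forall fun n => ?_)
    calc c * b n = (c * G.nu (x ^ n)) / n := by
          simp only [hb, ENNReal.div_eq_inv_mul]; ring
      _ ≤ F.nu (x ^ n) / n := by
          gcongr
          exact claimA F G hα hG (x ^ n)
      _ = a n := rfl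
end

section
/- Let I be an ideal in a Noetherian ring R. Then the asymptotic Samuel function of the adic filtration {I^m} equals that of the filtration of integral closures {\overline{I^m}}: ν̄_{\{I^m\}} = ν̄_{\{\overline{I^m}\}}. -/
open Filter Topology Polynomial
open scoped ENNReal

/-- The integral closure of an ideal `J`: the set of `x` satisfying an equation
`x^n + a_1 x^{n-1} + ⋯ + a_n = 0` with `a_i ∈ J^i`. -/
def Ideal.intCl {R : Type*} [CommRing R] (J : Ideal R) : Set R :=
  {x | ∃ n : ℕ, 0 < n ∧ ∃ a : ℕ → R, (∀ i ∈ Finset.Icc 1 n, a i ∈ J ^ i) ∧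
    x ^ n + ∑ i ∈ Finset.Icc 1 n, a i * x ^ (n - i) = 0}

/-- The adic filtration `{I^m}` of powers of an ideal. -/
def adicFiltration {R : Type*} [CommRing R] (J : Ideal R) : RingFiltration R where
  I := fun m => J ^ m
  top_eq := by show J ^ 0 = ⊤; rw [pow_zero, Ideal.one_eq_top]
  antitone_succ := fun n => Ideal.pow_le_pow_right (Nat.le_succ n)
  mul_le := fun m n => (pow_add J m n).ge

/-!
Since `J^m ⊆ \bar{J^m}`, only `ν̄_{\bar{J^•}} ≤ ν̄_{J^•}` needs proof, i.e. `m / n ≤ ν̄_{J^•}(x)`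
whenever `x ^ n ∈ \bar{J^m}`. An element integral over `Q` of degree `d` satisfies
`x ^ (k + d) ∈ Q ^ (k + 1)` (rewrite `x ^ d` by the integral equation and induct), so
`x ^ (n (k + d)) ∈ J ^ (m k)` and `ν̄_{J^•}(x) ≥ m k / (n (k + d)) → m / n`.
-/

theorem ENNReal.tendsto_natCast_div_add_atTop (d : ℕ) :
    Tendsto (fun k : ℕ ↦ (k : ℝ≥0∞) / (k + d)) atTop (𝓝 1) := by
  refine (ENNReal.tendsto_coe.2 (_root_.tendsto_natCast_div_add_atTop (d : NNReal))).congr' ?_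
  filter_upwards [eventually_gt_atTop 0] with k hk
  rw [ENNReal.coe_div (by positivity)]
  simp

namespace Ideal

variable {R : Type*} [CommRing R]

theorem subset_intCl (Q : Ideal R) : (Q : Set R) ⊆ Q.intCl := by
  intro x hx
  refine ⟨1, one_pos, fun _ ↦ -x, fun i hi ↦ ?_, by simp⟩
  obtain rfl : i = 1 := by simpa using hi
  simpa using hx

theorem exists_pow_add_mem_pow_of_mem_intCl {Q : Ideal R} {x : R} (hx : x ∈ Q.intCl) :
    ∃ d, ∀ k, x ^ (k + d) ∈ Q ^ (k + 1) := by
  obtain ⟨d, -, a, ha, heq⟩ := hx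
  -- for `k < d` the exponent `k + 1 - d` truncates to `0`
  have key : ∀ k, x ^ k ∈ Q ^ (k + 1 - d) := by
    intro k
    induction k using Nat.strong_induction_on with
    | _ k ih =>
      rcases lt_or_ge k d with hk | hk
      · simp [Nat.sub_eq_zero_of_le hk]
      have hxk : x ^ k = -∑ i ∈ Finset.Icc 1 d, a i * x ^ (k - i) := by
        rw [← Nat.sub_add_cancel hk, pow_add, eq_neg_of_add_eq_zero_left heq, mul_neg,
          Finset.mul_sum]
        refine congrArg _ (Finset.sum_congr rfl fun i hi ↦ ?_)
        have hi' := Finset.mem_Icc.mp hi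
        rw [mul_left_comm, ← pow_add]
        congr 2
        omega
      rw [hxk]
      refine neg_mem (sum_mem _ fun i hi ↦ ?_)
      have hi' := Finset.mem_Icc.mp hi
      have hterm := mul_mem_mul (ha i hi) (ih (k - i) (by omega))
      rw [← pow_add] at hterm
      exact pow_le_pow_right (by omega) hterm
  refine ⟨d, fun k ↦ ?_⟩
  simpa [show k + d + 1 - d = k + 1 by omega] using key (k + d)

end Ideal

namespace RingFiltration

variable {R : Type*} [CommRing R]

theorem le_nu_of_mem (F : RingFiltration R) {f : R} {m : ℕ} (hf : f ∈ F.I m) :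
    (m : ℝ≥0∞) ≤ F.nu f :=
  le_sSup ⟨m, hf, rfl⟩

theorem nu_mono {F F' : RingFiltration R} (h : ∀ m, F.I m ≤ F'.I m) (f : R) :
    F.nu f ≤ F'.nu f :=
  sSup_le_sSup (Set.image_mono fun m hm ↦ h m hm)

theorem nubar_mono {F F' : RingFiltration R} (h : ∀ m, F.I m ≤ F'.I m) (f : R) :
    F.nubar f ≤ F'.nubar f :=
  limsup_le_limsup (Eventually.of_forall fun _ ↦ ENNReal.div_le_div_right (nu_mono h _) _)

theorem nubar_le_of_forall_pow_mem {F : RingFiltration R} {x : R} {c : ℝ≥0∞}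
    (h : ∀ n m : ℕ, 0 < n → x ^ n ∈ F.I m → (m : ℝ≥0∞) / n ≤ c) : F.nubar x ≤ c := by
  refine limsup_le_of_le (by isBoundedDefault) ?_
  filter_upwards [eventually_gt_atTop 0] with n hn
  refine ENNReal.div_le_of_le_mul (sSup_le ?_)
  rintro _ ⟨m, hm, rfl⟩
  exact (ENNReal.div_le_iff (by simpa using hn.ne') (by simp)).mp (h n m hn hm)

theorem div_le_nubar_of_pow_mem (F : RingFiltration R) {x : R} {m n d : ℕ} (hn : 0 < n)
    (h : ∀ k, x ^ (n * (k + d)) ∈ F.I (m * k)) : (m : ℝ≥0∞) / n ≤ F.nubar x := by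
  have hn' : (n : ℝ≥0∞) ≠ 0 := by simpa using hn.ne'
  have hlim : Tendsto (fun k : ℕ ↦ (m * k : ℝ≥0∞) / (n * (k + d))) atTop (𝓝 (m / n)) := by
    simp_rw [ENNReal.mul_div_mul_comm (Or.inl hn') (Or.inl (by simp))]
    simpa using ENNReal.Tendsto.const_mul (a := (m / n : ℝ≥0∞))
      (ENNReal.tendsto_natCast_div_add_atTop d) (Or.inl one_ne_zero)
  have hsub : Tendsto (fun k : ℕ ↦ n * (k + d)) atTop atTop :=
    (tendsto_add_atTop_nat d).const_mul_atTop' hn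
  calc (m : ℝ≥0∞) / n
      = limsup (fun k : ℕ ↦ (m * k : ℝ≥0∞) / (n * (k + d))) atTop := hlim.limsup_eq.symm
    _ ≤ limsup ((fun N : ℕ ↦ F.nu (x ^ N) / N) ∘ fun k ↦ n * (k + d)) atTop :=
        limsup_le_limsup (Eventually.of_forall fun k ↦ by
          simpa using ENNReal.div_le_div_right (F.le_nu_of_mem (h k)) _)
    _ ≤ F.nubar x := hsub.limsup_comp_le_limsup

end RingFiltration

theorem nubar_adic_eq_nubar_intCl_general {R : Type*} [CommRing R]
    (J : Ideal R) (G : RingFiltration R)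
    (hG : ∀ m, (G.I m : Set R) = Ideal.intCl (J ^ m)) (x : R) :
    (adicFiltration J).nubar x = G.nubar x := by
  refine le_antisymm (RingFiltration.nubar_mono (fun m y hy ↦ ?_) x) ?_
  · rw [← SetLike.mem_coe, hG m]
    exact (J ^ m).subset_intCl hy
  · refine RingFiltration.nubar_le_of_forall_pow_mem fun n m hn hm ↦ ?_
    rw [← SetLike.mem_coe, hG m] at hm
    obtain ⟨d, hd⟩ := Ideal.exists_pow_add_mem_pow_of_mem_intCl hm
    refine (adicFiltration J).div_le_nubar_of_pow_mem (d := d) hn fun k ↦ ?_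
    have hk : x ^ (n * (k + d)) ∈ (J ^ m) ^ k :=
      Ideal.pow_le_pow_right k.le_succ (pow_mul x n (k + d) ▸ hd k)
    simpa [adicFiltration, pow_mul] using hk

/-- For an ideal `I` of a Noetherian ring `R`, the asymptotic Samuel function of the adic
filtration `{I^m}` equals that of the filtration of integral closures `{\bar{I^m}}`. -/
theorem nubar_adic_eq_nubar_intCl {R : Type*} [CommRing R] [IsNoetherianRing R]
    (J : Ideal R) (G : RingFiltration R)
    (hG : ∀ m, (G.I m : Set R) = Ideal.intCl (J ^ m)) (x : R) :
    (adicFiltration J).nubar x = G.nubar x :=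
  nubar_adic_eq_nubar_intCl_general J G hG x
end

section
/- For a filtration I of a Noetherian ring R, the Rees algebra R[K(I)] = ⊕_m K(I)_m t^m of the filtration K(I) is integrally closed in the polynomial ring R[t]. -/
open Filter Topology Polynomial
open scoped ENNReal

/-- The Rees algebra `Σ_m F_m t^m ⊆ R[t]` of a filtration, realized as the subalgebra of
polynomials whose `m`-th coefficient lies in `F_m`. -/
def RingFiltration.reesAlgebra {R : Type*} [CommRing R] (F : RingFiltration R) :
    Subalgebra R (Polynomial R) where
  carrier := {p | ∀ m, p.coeff m ∈ F.I m}
  add_mem' := fun hp hq m => by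
    simpa [Polynomial.coeff_add] using (F.I m).add_mem (hp m) (hq m)
  mul_mem' := by
    intro p q hp hq m
    rw [Polynomial.coeff_mul]
    refine Ideal.sum_mem _ fun x hx => ?_
    have h : x.1 + x.2 = m := Finset.HasAntidiagonal.mem_antidiagonal.mp hx
    exact h ▸ F.mul_le x.1 x.2 (Ideal.mul_mem_mul (hp x.1) (hq x.2))
  algebraMap_mem' := by
    intro r m
    rw [Polynomial.algebraMap_eq, Polynomial.coeff_C]
    split
    · next h => subst h; rw [F.top_eq]; trivial
    · exact (F.I m).zero_mem

/-!
Let `p` be integral over the Rees algebra of `K`, say with monic equation `q`, and let `a` be its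
leading coefficient and `d` its degree. Every power `p ^ N` is the value at `p` of `X ^ N %ₘ q`,
a polynomial of degree `≤ deg q` with coefficients in the Rees algebra; comparing the coefficients
of `t ^ (N d)` gives `a ^ N ∈ K_{N d - c}` with `c` independent of `N`. Hence
`N d - c ≤ ν̄(a ^ N) ≤ N ν̄(a)` for all `N`, so `d ≤ ν̄(a)`, i.e. `a ∈ K_d`. The leading monomial
of `p` thus lies in the Rees algebra, and subtracting it we conclude by induction on the number
of terms of `p`.
-/

theorem ENNReal.le_of_forall_natCast_mul_le_mul_add {x y c : ℝ≥0∞} (hc : c ≠ ⊤)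
    (h : ∀ N : ℕ, 0 < N → (N : ℝ≥0∞) * y ≤ N * x + c) : y ≤ x := by
  refine ENNReal.le_of_forall_pos_le_add fun ε hε _ => ?_
  have hε0 : (ε : ℝ≥0∞) ≠ 0 := by simpa using hε.ne'
  obtain ⟨N, hN⟩ := ENNReal.exists_nat_gt (ENNReal.div_ne_top hc hε0)
  have hc_lt : c < N * ε := (ENNReal.div_lt_iff (Or.inl hε0) (Or.inl ENNReal.coe_ne_top)).mp hN
  have hN0 : 0 < N := by
    rcases N.eq_zero_or_pos with rfl | hpos
    · simp at hc_lt
    · exact hpos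
  refine (ENNReal.mul_le_mul_iff_right (by exact_mod_cast hN0.ne')
    (ENNReal.natCast_ne_top N)).mp ?_
  calc (N : ℝ≥0∞) * y ≤ N * x + c := h N hN0
    _ ≤ N * x + N * ε := by gcongr
    _ = N * (x + ε) := (mul_add _ _ _).symm

namespace RingFiltration

variable {R : Type*} [CommRing R] (F : RingFiltration R)

theorem antitone : Antitone F.I :=
  antitone_nat_of_succ_le F.antitone_succ

theorem monomial_mem_reesAlgebra {n : ℕ} {a : R} (ha : a ∈ F.I n) :
    monomial n a ∈ F.reesAlgebra := fun m => by
  rw [coeff_monomial]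
  split_ifs with h
  · exact h ▸ ha
  · exact (F.I m).zero_mem

theorem nubar_pow_le (f : R) {N : ℕ} (hN : N ≠ 0) : F.nubar (f ^ N) ≤ N * F.nubar f := by
  have hdiv : ∀ k : ℕ, F.nu ((f ^ N) ^ k) / k = N * (F.nu (f ^ (N * k)) / (N * k : ℕ)) := by
    intro k
    rw [← pow_mul, Nat.cast_mul, ← mul_div_assoc,
      ENNReal.mul_div_mul_left _ _ (by exact_mod_cast hN) (ENNReal.natCast_ne_top N)]
  have hmul : Tendsto (fun k => N * k) atTop atTop :=
    tendsto_id.const_mul_atTop' (Nat.pos_of_ne_zero hN)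
  calc F.nubar (f ^ N)
      = limsup (fun k : ℕ => N * (F.nu (f ^ (N * k)) / (N * k : ℕ))) atTop :=
        limsup_congr (.of_forall hdiv)
    _ = N * limsup (fun k : ℕ => F.nu (f ^ (N * k)) / (N * k : ℕ)) atTop :=
        ENNReal.limsup_const_mul_of_ne_top (ENNReal.natCast_ne_top N)
    _ ≤ N * F.nubar f := by
        gcongr
        exact hmul.limsup_comp_le_limsup (u := fun j : ℕ => F.nu (f ^ j) / j)

theorem coeff_aeval_mem {p : R[X]} {r : F.reesAlgebra[X]} {d m : ℕ} (hp : p.natDegree ≤ d)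
    (hr : r.natDegree ≤ m) (k : ℕ) : (aeval p r).coeff k ∈ F.I (k - m * d) := by
  rw [aeval_eq_sum_range, finsetSum_coeff]
  refine Ideal.sum_mem _ fun i hi => ?_
  have him : i ≤ m := by rw [Finset.mem_range] at hi; omega
  rw [Subalgebra.smul_def, smul_eq_mul, coeff_mul]
  refine Ideal.sum_mem _ fun x hx => ?_
  rw [Finset.HasAntidiagonal.mem_antidiagonal] at hx
  by_cases hx2 : x.2 ≤ m * d
  · exact Ideal.mul_mem_right _ _ (F.antitone (by omega) ((r.coeff i).2 x.1))
  · have hdeg : (p ^ i).natDegree < x.2 :=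
      natDegree_pow_le.trans_lt (by nlinarith [Nat.mul_le_mul him hp])
    rw [coeff_eq_zero_of_natDegree_lt hdeg, mul_zero]
    exact (F.I _).zero_mem

theorem exists_leadingCoeff_pow_mem {p : R[X]} (hp : IsIntegral F.reesAlgebra p) :
    ∃ c : ℕ, ∀ N : ℕ, p.leadingCoeff ^ N ∈ F.I (N * p.natDegree - c) := by
  obtain ⟨q, hq, hqp⟩ := hp
  refine ⟨q.natDegree * p.natDegree, fun N => ?_⟩
  have hpow : p ^ N = aeval p (X ^ N %ₘ q) := by
    rw [aeval_modByMonic_eq_self_of_root hqp, map_pow, aeval_X]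
  rw [← coeff_pow_mul_natDegree, hpow]
  exact F.coeff_aeval_mem le_rfl (natDegree_modByMonic_le _ hq) _

end RingFiltration

theorem RingFiltration.leadingCoeff_mem_of_isIntegral {R : Type*} [CommRing R]
    {F K : RingFiltration R} (hK : ∀ m : ℕ, ∀ f : R, f ∈ K.I m ↔ (m : ℝ≥0∞) ≤ F.nubar f)
    {p : R[X]} (hp : IsIntegral K.reesAlgebra p) : p.leadingCoeff ∈ K.I p.natDegree := by
  obtain ⟨c, hc⟩ := K.exists_leadingCoeff_pow_mem hp
  refine (hK _ _).mpr (ENNReal.le_of_forall_natCast_mul_le_mul_add (ENNReal.natCast_ne_top c)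
    fun N hN => ?_)
  calc (N : ℝ≥0∞) * p.natDegree ≤ (N * p.natDegree - c : ℕ) + c := by
        exact_mod_cast le_tsub_add
    _ ≤ F.nubar (p.leadingCoeff ^ N) + c := by gcongr; exact (hK _ _).mp (hc N)
    _ ≤ N * F.nubar p.leadingCoeff + c := by gcongr; exact F.nubar_pow_le _ hN.ne'

theorem reesAlgebra_saturation_integrallyClosed_general {R : Type*} [CommRing R]
    (F K : RingFiltration R)
    (hK : ∀ m : ℕ, ∀ f : R, f ∈ K.I m ↔ (m : ℝ≥0∞) ≤ F.nubar f)
    (p : Polynomial R) (hp : IsIntegral (↥K.reesAlgebra) p) :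
    p ∈ K.reesAlgebra := by
  induction hcard : p.support.card using Nat.strong_induction_on generalizing p with
  | _ n ih =>
    rcases eq_or_ne p 0 with rfl | hp0
    · exact zero_mem _
    have hlead : monomial p.natDegree p.leadingCoeff ∈ K.reesAlgebra :=
      K.monomial_mem_reesAlgebra (RingFiltration.leadingCoeff_mem_of_isIntegral hK hp)
    have herase : IsIntegral K.reesAlgebra p.eraseLead := by
      rw [← self_sub_monomial_natDegree_leadingCoeff]
      exact hp.sub (isIntegral_algebraMap (x := (⟨_, hlead⟩ : K.reesAlgebra)))
    rw [← eraseLead_add_monomial_natDegree_leadingCoeff p]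
    exact add_mem (ih _ (hcard ▸ eraseLead_support_card_lt hp0) _ herase rfl) hlead

/-- For a filtration `I` of a Noetherian ring `R`, the Rees algebra of the saturation
`K(I)` (where `K(I)_m = {f : ν̄_I(f) ≥ m}`) is integrally closed in `R[t]`. -/
theorem reesAlgebra_saturation_integrallyClosed {R : Type*} [CommRing R]
    [IsNoetherianRing R] (F K : RingFiltration R)
    (hK : ∀ m : ℕ, ∀ f : R, f ∈ K.I m ↔ (m : ℝ≥0∞) ≤ F.nubar f)
    (p : Polynomial R) (hp : IsIntegral (↥K.reesAlgebra) p) :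
    p ∈ K.reesAlgebra :=
  reesAlgebra_saturation_integrallyClosed_general F K hK p hp
end

section
/- Let R = k[[x]] and for α ∈ ℝ_{>0} let J^(α) be the filtration with J^(α)_m = (x^{⌈αm⌉}). Then the Rees algebra R[J^(α)] = Σ_m (x^{⌈αm⌉}) t^m is integrally closed in R[t]. -/
/-!
Give the monomial `t ^ a * x ^ u` of `k[[x]][t]` the weight `u - α a`; the Rees algebra consists
exactly of the polynomials whose monomials all have nonnegative weight. Call the pivot of `p`
its monomial of least weight and, among those, of largest `t`-degree. Pivots multiply: the pivot
of `q * w` is the sum of the pivots and its coefficient is the product of theirs, so it does not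
cancel. Hence if `p` has a monomial of weight `v < 0`, the coefficient of `p ^ n` at `n` times
its pivot is nonzero, while each term `c_i * p ^ i` (`i < n`) of an integral equation only has
monomials of weight `≥ i v > n v`.
-/

open Filter Topology Polynomial
open scoped ENNReal

noncomputable section Monomials

open Finset
open scoped Pointwise

variable {k : Type*} [CommSemiring k]

/-- The coefficient of `t ^ s.1 * x ^ s.2` in `q ∈ k[[x]][t]`. -/
def bicoeff (q : (PowerSeries k)[X]) (s : ℕ × ℕ) : k :=
  PowerSeries.coeff s.2 (q.coeff s.1)

def bisupport (q : (PowerSeries k)[X]) : Set (ℕ × ℕ) :=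
  {s | bicoeff q s ≠ 0}

lemma bicoeff_mul (q w : (PowerSeries k)[X]) (c : ℕ × ℕ) :
    bicoeff (q * w) c = ∑ x ∈ antidiagonal c.1, ∑ y ∈ antidiagonal c.2,
      bicoeff q (x.1, y.1) * bicoeff w (x.2, y.2) := by
  simp only [bicoeff, coeff_mul, map_sum, PowerSeries.coeff_mul]

lemma bisupport_mul_subset (q w : (PowerSeries k)[X]) :
    bisupport (q * w) ⊆ bisupport q + bisupport w := by
  intro c hc
  have hc : bicoeff (q * w) c ≠ 0 := hc
  rw [bicoeff_mul] at hc
  obtain ⟨x, hx, hx0⟩ := Finset.exists_ne_zero_of_sum_ne_zero hc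
  obtain ⟨y, hy, hxy0⟩ := Finset.exists_ne_zero_of_sum_ne_zero hx0
  exact ⟨(x.1, y.1), left_ne_zero_of_mul hxy0, (x.2, y.2), right_ne_zero_of_mul hxy0,
    Prod.ext (mem_antidiagonal.mp hx) (mem_antidiagonal.mp hy)⟩

lemma bicoeff_mul_of_unique {q w : (PowerSeries k)[X]} {P Q : ℕ × ℕ}
    (h : ∀ s ∈ bisupport q, ∀ t ∈ bisupport w, s + t = P + Q → s = P ∧ t = Q) :
    bicoeff (q * w) (P + Q) = bicoeff q P * bicoeff w Q := by
  have hunique : ∀ x ∈ antidiagonal (P + Q).1, ∀ y ∈ antidiagonal (P + Q).2,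
      bicoeff q (x.1, y.1) * bicoeff w (x.2, y.2) ≠ 0 → x = (P.1, Q.1) ∧ y = (P.2, Q.2) := by
    intro x hx y hy hxy
    obtain ⟨hs, ht⟩ := h (x.1, y.1) (left_ne_zero_of_mul hxy) (x.2, y.2)
      (right_ne_zero_of_mul hxy)
      (Prod.ext (mem_antidiagonal.mp hx) (mem_antidiagonal.mp hy))
    simp only [Prod.ext_iff] at hs ht
    exact ⟨Prod.ext hs.1 ht.1, Prod.ext hs.2 ht.2⟩
  have hP₁ : (P.1, Q.1) ∈ antidiagonal (P + Q).1 := mem_antidiagonal.mpr rfl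
  have hP₂ : (P.2, Q.2) ∈ antidiagonal (P + Q).2 := mem_antidiagonal.mpr rfl
  rw [bicoeff_mul, Finset.sum_eq_single_of_mem _ hP₁, Finset.sum_eq_single_of_mem _ hP₂]
  · intro y hy hyne
    by_contra hxy
    exact hyne (hunique _ hP₁ y hy hxy).2
  · intro x hx hxne
    refine Finset.sum_eq_zero fun y hy => ?_
    by_contra hxy
    exact hxne (hunique x hx y hy hxy).1

lemma bisupport_one_subset : bisupport (1 : (PowerSeries k)[X]) ⊆ {0} := by
  rintro ⟨a, u⟩ h
  by_contra hne
  apply h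
  rcases Nat.eq_zero_or_pos a with rfl | ha
  · have hu : u ≠ 0 := fun hu => hne (by simp [hu])
    simp [bicoeff, PowerSeries.coeff_one, hu]
  · simp [bicoeff, coeff_one, ha.ne']

lemma bicoeff_one_zero : bicoeff (1 : (PowerSeries k)[X]) 0 = 1 := by
  simp [bicoeff]

end Monomials

section Weight

variable {k : Type*} [CommSemiring k] (α : ℝ)

def weight : ℕ × ℕ →+ ℝ where
  toFun s := s.2 - α * s.1
  map_zero' := by simp
  map_add' s t := by simp only [Prod.fst_add, Prod.snd_add]; push_cast; ring

def pivotKey : ℕ × ℕ →+ ℝ ×ₗ ℕ where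
  toFun s := toLex (-weight α s, s.1)
  map_zero' := by simp
  map_add' s t := by rw [map_add, neg_add]; rfl

lemma pivotKey_injective : Function.Injective (pivotKey α) := by
  rintro ⟨a, u⟩ ⟨b, v⟩ h
  simp only [pivotKey, weight, AddMonoidHom.coe_mk, ZeroHom.coe_mk, toLex_inj, Prod.mk.injEq]
    at h
  obtain ⟨hw, rfl⟩ := h
  simpa using hw

lemma pivotKey_antitone_snd (a : ℕ) : Antitone fun u => pivotKey α (a, u) := by
  intro v u h
  rcases h.eq_or_lt with rfl | h
  · exact le_rfl
  · refine Prod.Lex.toLex_le_toLex.mpr (Or.inl ?_)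
    simp only [weight, AddMonoidHom.coe_mk, ZeroHom.coe_mk, neg_lt_neg_iff, sub_lt_sub_iff_right]
    exact_mod_cast h

/-- `P` is the pivot of `q`: among the monomials of `q` of least weight, it has the largest
`t`-degree. -/
def IsPivot (q : (PowerSeries k)[X]) (P : ℕ × ℕ) : Prop :=
  ∀ s ∈ bisupport q, pivotKey α s ≤ pivotKey α P

lemma exists_isPivot {q : (PowerSeries k)[X]} (hq : q ≠ 0) :
    ∃ P ∈ bisupport q, IsPivot α q P := by
  classical
  have hcolumn : ∀ a ∈ q.support, (a, (q.coeff a).order.toNat) ∈ bisupport q :=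
    fun a ha => PowerSeries.coeff_order (mem_support_iff.mp ha)
  -- Within a column `t ^ a` the key is largest at the lowest power of `x`, so only these
  -- finitely many monomials compete.
  obtain ⟨_, hP, hPmax⟩ :=
    (q.support.image fun a => (a, (q.coeff a).order.toNat)).exists_max_image
      (pivotKey α) ((support_nonempty.mpr hq).image _)
  obtain ⟨a, ha, rfl⟩ := Finset.mem_image.mp hP
  refine ⟨_, hcolumn a ha, fun s hs => ?_⟩
  have hs₁ : s.1 ∈ q.support := mem_support_iff.mpr fun h => hs (by simp [bicoeff, h])
  have hord : (q.coeff s.1).order.toNat ≤ s.2 :=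
    ENat.toNat_le_of_le_natCast (PowerSeries.order_le _ hs)
  exact (pivotKey_antitone_snd α s.1 hord).trans (hPmax _ (Finset.mem_image_of_mem _ hs₁))

variable {α}

lemma IsPivot.weight_le {q : (PowerSeries k)[X]} {P s : ℕ × ℕ} (h : IsPivot α q P)
    (hs : s ∈ bisupport q) : weight α P ≤ weight α s := by
  have hkey := Prod.Lex.monotone_fst _ _ (h s hs)
  simp only [pivotKey, AddMonoidHom.coe_mk, ZeroHom.coe_mk, ofLex_toLex] at hkey
  linarith

lemma isPivot_one : IsPivot α (1 : (PowerSeries k)[X]) 0 := by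
  intro s hs
  rw [bisupport_one_subset hs]

lemma IsPivot.mul {q w : (PowerSeries k)[X]} {P Q : ℕ × ℕ} (hq : IsPivot α q P)
    (hw : IsPivot α w Q) : IsPivot α (q * w) (P + Q) := by
  intro c hc
  obtain ⟨s, hs, t, ht, rfl⟩ := bisupport_mul_subset q w hc
  rw [map_add, map_add]
  exact add_le_add (hq s hs) (hw t ht)

lemma IsPivot.bicoeff_mul {q w : (PowerSeries k)[X]} {P Q : ℕ × ℕ} (hq : IsPivot α q P)
    (hw : IsPivot α w Q) : bicoeff (q * w) (P + Q) = bicoeff q P * bicoeff w Q := by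
  refine bicoeff_mul_of_unique fun s hs t ht hst => ?_
  have hkey := (add_eq_add_iff_eq_and_eq (hq s hs) (hw t ht)).mp (by rw [← map_add, hst, map_add])
  exact ⟨pivotKey_injective α hkey.1, pivotKey_injective α hkey.2⟩

lemma IsPivot.pow {q : (PowerSeries k)[X]} {P : ℕ × ℕ} (h : IsPivot α q P) (n : ℕ) :
    IsPivot α (q ^ n) (n • P) := by
  induction n with
  | zero => simpa using isPivot_one
  | succ n ih => rw [pow_succ, succ_nsmul]; exact ih.mul h

lemma IsPivot.bicoeff_pow {q : (PowerSeries k)[X]} {P : ℕ × ℕ} (h : IsPivot α q P) (n : ℕ) :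
    bicoeff (q ^ n) (n • P) = bicoeff q P ^ n := by
  induction n with
  | zero => simpa using bicoeff_one_zero
  | succ n ih => rw [pow_succ, succ_nsmul, (h.pow n).bicoeff_mul h, ih, pow_succ]

end Weight

lemma mem_reesAlgebra_iff_weight_nonneg {k : Type*} [CommRing k] (α : ℝ)
    (G : RingFiltration (PowerSeries k))
    (hG : ∀ m : ℕ, G.I m = Ideal.span {(PowerSeries.X : PowerSeries k) ^ ⌈α * m⌉₊})
    (q : (PowerSeries k)[X]) :
    q ∈ G.reesAlgebra ↔ ∀ s ∈ bisupport q, 0 ≤ weight α s := by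
  change (∀ m, q.coeff m ∈ G.I m) ↔ _
  simp only [hG, Ideal.mem_span_singleton, PowerSeries.X_pow_dvd_iff, Nat.lt_ceil]
  simp only [bisupport, bicoeff, weight, AddMonoidHom.coe_mk, ZeroHom.coe_mk, sub_nonneg,
    Set.mem_ofPred_eq, Prod.forall]
  constructor
  · intro h m j hj
    by_contra hlt
    exact hj (h m j (not_le.mp hlt))
  · intro h m j hj
    by_contra hne
    exact (h m j hne).not_gt hj

lemma IsIntegral.exists_pow_add_sum_eq_zero {R S : Type*} [CommRing R] [CommRing S]
    [Algebra R S] {x : S} (hx : IsIntegral R x) :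
    ∃ (n : ℕ) (c : ℕ → R),
      x ^ n + ∑ i ∈ Finset.range n, algebraMap R S (c i) * x ^ i = 0 := by
  obtain ⟨f, hf, hfx⟩ := hx
  refine ⟨f.natDegree, f.coeff, ?_⟩
  rw [hf.as_sum] at hfx
  simpa [eval₂_finsetSum] using hfx

lemma bicoeff_mul_pow_eq_zero {k : Type*} [CommSemiring k] {α : ℝ} {c p : (PowerSeries k)[X]}
    {P : ℕ × ℕ} (hc : ∀ s ∈ bisupport c, 0 ≤ weight α s) (hp : IsPivot α p P)
    (hP : weight α P < 0) {i n : ℕ} (hin : i < n) : bicoeff (c * p ^ i) (n • P) = 0 := by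
  by_contra hne
  obtain ⟨s, hs, t, ht, hst⟩ := bisupport_mul_subset c (p ^ i) hne
  have hweight := congrArg (weight α) hst
  rw [map_add, map_nsmul, nsmul_eq_mul] at hweight
  have ht' := (hp.pow i).weight_le ht
  rw [map_nsmul, nsmul_eq_mul] at ht'
  have hin' : (i : ℝ) < n := by exact_mod_cast hin
  nlinarith [hc s hs]

theorem powerSeries_reesAlgebra_integrallyClosed_general {k : Type*} [Field k] (α : ℝ)
    (G : RingFiltration (PowerSeries k))
    (hG : ∀ m : ℕ, G.I m = Ideal.span {(PowerSeries.X : PowerSeries k) ^ ⌈α * m⌉₊})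
    (p : Polynomial (PowerSeries k)) (hp : IsIntegral (↥G.reesAlgebra) p) :
    p ∈ G.reesAlgebra := by
  rw [mem_reesAlgebra_iff_weight_nonneg α G hG]
  by_contra! ⟨s, hs, hs_neg⟩
  have hp0 : p ≠ 0 := by rintro rfl; exact hs (by simp [bicoeff])
  obtain ⟨P, hP, hpivot⟩ := exists_isPivot α hp0
  have hP_neg : weight α P < 0 := (hpivot.weight_le hs).trans_lt hs_neg
  obtain ⟨n, c, hpc⟩ := hp.exists_pow_add_sum_eq_zero
  have hc : ∀ i, ∀ s ∈ bisupport (algebraMap _ (PowerSeries k)[X] (c i)), 0 ≤ weight α s :=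
    fun i => (mem_reesAlgebra_iff_weight_nonneg α G hG _).mp (c i).2
  have hsum : bicoeff (p ^ n) (n • P) +
      ∑ i ∈ Finset.range n, bicoeff (algebraMap _ _ (c i) * p ^ i) (n • P) = 0 := by
    simpa only [bicoeff, coeff_add, finsetSum_coeff, map_add, map_sum, coeff_zero, map_zero]
      using congrArg (bicoeff · (n • P)) hpc
  rw [Finset.sum_eq_zero fun i hi =>
      bicoeff_mul_pow_eq_zero (hc i) hpivot hP_neg (Finset.mem_range.mp hi),
    add_zero, hpivot.bicoeff_pow] at hsum
  exact hP (eq_zero_of_pow_eq_zero hsum)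

/-- In `R = k[[x]]`, for real `α > 0` the Rees algebra of the twisted filtration
`J^(α)` with `J^(α)_m = (x^{⌈αm⌉})` is integrally closed in `R[t]`. -/
theorem powerSeries_reesAlgebra_integrallyClosed {k : Type*} [Field k] (α : ℝ)
    (hα : 0 < α) (G : RingFiltration (PowerSeries k))
    (hG : ∀ m : ℕ, G.I m = Ideal.span {(PowerSeries.X : PowerSeries k) ^ ⌈α * m⌉₊})
    (p : Polynomial (PowerSeries k)) (hp : IsIntegral (↥G.reesAlgebra) p) :
    p ∈ G.reesAlgebra :=
  powerSeries_reesAlgebra_integrallyClosed_general α G hG p hp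
end
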